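/- arXiv:2506.16780 — 4 statements merged into one kernel-verified Lean document; each statement's English description precedes it below -/
import Mathlib

section
/- Let φ : (0,∞) → (0,∞) be an increasing, differentiable, concave function satisfying the weak scaling condition: there exist a₁ > 0 and δ₁ ∈ (0,1) with a₁ λ^{δ₁} φ(t) ≤ φ(λt) for all t ≥ 1, λ ≥ 1. If additionally φ'(λ) ≤ φ(λ)/λ for all λ > 0 (which holds for Bernstein functions with zero drift), then there exists a constant c > 0 such that c · φ(λ)/λ ≤ φ'(λ) ≤ φ(λ)/λ for all λ ≥ 1. -/
theorem deriv_comparable_of_scaling (φ : ℝ → ℝ) (a₁ δ₁ : ℝ)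
    (ha₁ : 0 < a₁) (hδ₁ : δ₁ ∈ Set.Ioo (0:ℝ) 1)
    (hpos : ∀ t > (0:ℝ), 0 < φ t)
    (hmono : MonotoneOn φ (Set.Ioi 0))
    (hconc : ConcaveOn ℝ (Set.Ioi 0) φ)
    (hdiff : ∀ t > (0:ℝ), DifferentiableAt ℝ φ t)
    (hscale : ∀ t ≥ (1:ℝ), ∀ l ≥ (1:ℝ), a₁ * l ^ δ₁ * φ t ≤ φ (l * t))
    (hupper : ∀ l > (0:ℝ), deriv φ l ≤ φ l / l) :
    ∃ c > (0:ℝ), ∀ l ≥ (1:ℝ), c * (φ l / l) ≤ deriv φ l ∧ deriv φ l ≤ φ l / l := by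
  obtain ⟨hδ0, hδ1⟩ := hδ₁
  set L : ℝ := max 2 ((2 / a₁) ^ (1 / δ₁)) with hLdef
  have hL2 : (2 : ℝ) ≤ L := le_max_left _ _
  have hL1 : (1 : ℝ) < L := lt_of_lt_of_le one_lt_two hL2
  have h2a : (0 : ℝ) < 2 / a₁ := by positivity
  -- a₁ * L ^ δ₁ ≥ 2
  have hLscale : (2 : ℝ) ≤ a₁ * L ^ δ₁ := by
    have hbase : (2 / a₁) ^ (1 / δ₁) ≤ L := le_max_right _ _
    have hb0 : (0 : ℝ) ≤ (2 / a₁) ^ (1 / δ₁) := Real.rpow_nonneg h2a.le _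
    have h1 : 2 / a₁ ≤ L ^ δ₁ := by
      calc 2 / a₁ = ((2 / a₁) ^ (1 / δ₁)) ^ δ₁ := by
            rw [one_div, Real.rpow_inv_rpow h2a.le hδ0.ne']
          _ ≤ L ^ δ₁ := Real.rpow_le_rpow hb0 hbase hδ0.le
    calc (2 : ℝ) = a₁ * (2 / a₁) := by field_simp
      _ ≤ a₁ * L ^ δ₁ := by nlinarith
  refine ⟨1 / (L - 1), one_div_pos.mpr (by linarith), fun l hl => ?_⟩
  have hl0 : (0 : ℝ) < l := lt_of_lt_of_le one_pos hl
  have hLl : l < L * l := by nlinarith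
  have hLl0 : (0 : ℝ) < L * l := by nlinarith
  have hslope : slope φ l (L * l) ≤ deriv φ l :=
    hconc.slope_le_deriv (Set.mem_Ioi.mpr hl0) (Set.mem_Ioi.mpr hLl0) hLl (hdiff l hl0)
  have hphil : 0 < φ l := hpos l hl0
  have h2phi : 2 * φ l ≤ φ (L * l) := by
    have := hscale l hl L hL1.le
    nlinarith
  have hden : (0 : ℝ) < L * l - l := by nlinarith
  have hkey : 1 / (L - 1) * (φ l / l) ≤ slope φ l (L * l) := by
    have heq : 1 / (L - 1) * (φ l / l) = φ l / (L * l - l) := by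
      rw [div_mul_div_comm, one_mul]
      congr 1
      ring
    rw [heq, slope_def_field]
    gcongr
    linarith
  exact ⟨hkey.trans hslope, hupper l hl0⟩
end

section
/- Let f ∈ C¹((0,∞)) be positive and satisfy (1+m) f(t) ≤ t f'(t) ≤ (1+M) f(t) for all t > 0, with 0 < m ≤ M < ∞. Define F(t) = ∫₀^t f(s) ds and φ(t) = ∫_t^∞ ds/√(F(s)) (which is finite for all t > 0). Then there exist constants c₁, c₂ > 0 such that c₁ √(t/f(t)) ≤ φ(t) ≤ c₂ √(t/f(t)) for all t > 0. -/
/-!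
The bounds on `t f'(t) / f(t)` say that `f(s) s^{-(1+m)}` increases and `f(s) s^{-(1+M)}`
decreases. Comparing `f` on `(0, s]` with these power laws gives
`s f(s) / (2+M) ≤ F(s) ≤ s f(s) / (2+m)`, so for `s ≥ t` the primitive `F(s)` lies between
`t f(t) / (2+M) · (s/t)^(2+m)` and `t f(t) / (2+m) · (s/t)^(2+M)`. Integrating `F^{-1/2}`
over `(t, ∞)` against these power laws shows that `φ(t)` is comparable to
`t / √(t f(t)) = √(t / f(t))`.
-/

open Set MeasureTheory Real

section PowerGrowth

variable {g : ℝ → ℝ} {p s t : ℝ}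

theorem monotoneOn_mul_rpow_neg_of_le_mul_deriv (hg : DifferentiableOn ℝ g (Ioi 0))
    (h : ∀ t > (0:ℝ), p * g t ≤ t * deriv g t) :
    MonotoneOn (fun s => g s * s ^ (-p)) (Ioi 0) := by
  have hderiv : ∀ x ∈ Ioi (0:ℝ), HasDerivAt (fun s => g s * s ^ (-p))
      (x ^ (-p - 1) * (x * deriv g x - p * g x)) x := fun x hx => by
    refine (((hg.differentiableAt (isOpen_Ioi.mem_nhds hx)).hasDerivAt).mul
      (hasDerivAt_rpow_const (p := -p) (Or.inl hx.ne'))).congr_deriv ?_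
    have hx0 : x ≠ 0 := ne_of_gt hx
    rw [rpow_sub_one hx0]
    field_simp
    ring
  refine monotoneOn_of_deriv_nonneg (convex_Ioi 0)
    (fun x hx => (hderiv x hx).continuousAt.continuousWithinAt)
    (fun x hx => ?_) (fun x hx => ?_) <;> rw [interior_Ioi] at hx
  · exact (hderiv x hx).differentiableAt.differentiableWithinAt
  · rw [(hderiv x hx).deriv]
    exact mul_nonneg (rpow_nonneg hx.le _) (sub_nonneg.2 (h x hx))

theorem antitoneOn_mul_rpow_neg_of_mul_deriv_le (hg : DifferentiableOn ℝ g (Ioi 0))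
    (h : ∀ t > (0:ℝ), t * deriv g t ≤ p * g t) :
    AntitoneOn (fun s => g s * s ^ (-p)) (Ioi 0) := by
  have := (monotoneOn_mul_rpow_neg_of_le_mul_deriv (g := -g) (p := p) hg.neg
    fun t ht => by rw [deriv.neg, Pi.neg_apply]; linarith [h t ht]).neg
  simpa only [Pi.neg_apply, neg_mul, neg_neg] using this

theorem mul_mul_div_rpow_le_of_monotoneOn (hg : MonotoneOn (fun s => g s * s ^ (-p)) (Ioi 0))
    (ht : 0 < t) (hts : t ≤ s) : t * g t * (s / t) ^ (p + 1) ≤ s * g s := by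
  have hs : 0 < s := ht.trans_le hts
  calc t * g t * (s / t) ^ (p + 1) = s * s ^ p * (g t * t ^ (-p)) := by
        rw [rpow_add_one (div_pos hs ht).ne', div_rpow hs.le ht.le, rpow_neg ht.le]
        field_simp
    _ ≤ s * s ^ p * (g s * s ^ (-p)) := mul_le_mul_of_nonneg_left (hg ht hs hts) (by positivity)
    _ = s * g s := by
        rw [rpow_neg hs.le]
        field_simp

theorem le_mul_mul_div_rpow_of_antitoneOn (hg : AntitoneOn (fun s => g s * s ^ (-p)) (Ioi 0))
    (ht : 0 < t) (hts : t ≤ s) : s * g s ≤ t * g t * (s / t) ^ (p + 1) := by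
  have := mul_mul_div_rpow_le_of_monotoneOn (g := -g)
    (by simpa only [Pi.neg_apply, neg_mul] using hg.neg) ht hts
  simp only [Pi.neg_apply] at this
  linarith

theorem intervalIntegral_le_mul_div_of_monotoneOn (hp : -1 < p) (ht : 0 < t)
    (hg : MonotoneOn (fun s => g s * s ^ (-p)) (Ioi 0)) (hint : IntervalIntegrable g volume 0 t) :
    ∫ s in (0:ℝ)..t, g s ≤ t * g t / (p + 1) := by
  calc ∫ s in (0:ℝ)..t, g s ≤ ∫ s in (0:ℝ)..t, g t * t ^ (-p) * s ^ p := by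
        refine intervalIntegral.integral_mono_on_of_le_Ioo ht.le hint
          ((intervalIntegral.intervalIntegrable_rpow' hp).const_mul _) fun s hs => ?_
        calc g s = g s * s ^ (-p) * s ^ p := by
              rw [mul_assoc, ← rpow_add hs.1, neg_add_cancel, rpow_zero, mul_one]
          _ ≤ g t * t ^ (-p) * s ^ p :=
              mul_le_mul_of_nonneg_right (hg hs.1 ht hs.2.le) (rpow_nonneg hs.1.le _)
    _ = t * g t / (p + 1) := by
        have hp1 : p + 1 ≠ 0 := by linarith
        rw [intervalIntegral.integral_const_mul, integral_rpow (Or.inl hp), zero_rpow hp1,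
          rpow_add_one ht.ne', rpow_neg ht.le]
        field_simp
        ring

theorem mul_div_le_intervalIntegral_of_antitoneOn (hp : -1 < p) (ht : 0 < t)
    (hg : AntitoneOn (fun s => g s * s ^ (-p)) (Ioi 0)) (hint : IntervalIntegrable g volume 0 t) :
    t * g t / (p + 1) ≤ ∫ s in (0:ℝ)..t, g s := by
  have := intervalIntegral_le_mul_div_of_monotoneOn (g := -g) hp ht
    (by simpa only [Pi.neg_apply, neg_mul] using hg.neg) hint.neg
  simp only [Pi.neg_apply, intervalIntegral.integral_neg, mul_neg, neg_div] at this
  linarith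

theorem intervalIntegral_le_mul_div_mul_rpow {q : ℝ} (hp : -1 < p)
    (hg_mono : MonotoneOn (fun s => g s * s ^ (-p)) (Ioi 0))
    (hg_anti : AntitoneOn (fun s => g s * s ^ (-q)) (Ioi 0))
    (hint : IntervalIntegrable g volume 0 s) (ht : 0 < t) (hts : t ≤ s) :
    ∫ x in (0:ℝ)..s, g x ≤ t * g t / (p + 1) * (s / t) ^ (q + 1) :=
  (intervalIntegral_le_mul_div_of_monotoneOn hp (ht.trans_le hts) hg_mono hint).trans <| by
    rw [div_mul_eq_mul_div]
    exact div_le_div_of_nonneg_right (le_mul_mul_div_rpow_of_antitoneOn hg_anti ht hts)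
      (by linarith)

theorem mul_div_mul_rpow_le_intervalIntegral {q : ℝ} (hq : -1 < q)
    (hg_mono : MonotoneOn (fun s => g s * s ^ (-p)) (Ioi 0))
    (hg_anti : AntitoneOn (fun s => g s * s ^ (-q)) (Ioi 0))
    (hint : IntervalIntegrable g volume 0 s) (ht : 0 < t) (hts : t ≤ s) :
    t * g t / (q + 1) * (s / t) ^ (p + 1) ≤ ∫ x in (0:ℝ)..s, g x :=
  le_trans (by
    rw [div_mul_eq_mul_div]
    exact div_le_div_of_nonneg_right (mul_mul_div_rpow_le_of_monotoneOn hg_mono ht hts)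
      (by linarith))
    (mul_div_le_intervalIntegral_of_antitoneOn hq (ht.trans_le hts) hg_anti hint)

end PowerGrowth

theorem intervalIntegrable_of_monotoneOn_Ioi {g : ℝ → ℝ} {t : ℝ} (ht : 0 < t)
    (hg : MonotoneOn g (Ioi 0)) (hg_nonneg : ∀ s > (0:ℝ), 0 ≤ g s) :
    IntervalIntegrable g volume 0 t := by
  rw [intervalIntegrable_iff_integrableOn_Ioc_of_le ht.le]
  refine Integrable.mono' (integrableOn_const (C := g t) measure_Ioc_lt_top.ne)
    (aemeasurable_restrict_of_monotoneOn measurableSet_Ioc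
      (hg.mono Ioc_subset_Ioi_self)).aestronglyMeasurable ?_
  filter_upwards [ae_restrict_mem measurableSet_Ioc] with s hs
  rw [norm_of_nonneg (hg_nonneg s hs.1)]
  exact hg hs.1 ht hs.2

section TailIntegral

variable {c q t : ℝ}

theorem mul_rpow_rpow_neg_half {x : ℝ} (hc : 0 ≤ c) (hx : 0 ≤ x) :
    (c * x ^ q) ^ (-(1:ℝ)/2) = (√c)⁻¹ * x ^ (-(q / 2)) := by
  rw [mul_rpow hc (rpow_nonneg hx _), ← rpow_mul hx, sqrt_eq_rpow, ← rpow_neg hc]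
  ring_nf

theorem eqOn_mul_div_rpow_rpow_neg_half (hc : 0 ≤ c) (ht : 0 < t) :
    EqOn (fun s => (c * (s / t) ^ q) ^ (-(1:ℝ)/2))
      (fun s => (√c)⁻¹ * t ^ (q / 2) * s ^ (-(q / 2))) (Ioi t) := fun s hs => by
  have hs : 0 < s := ht.trans hs
  dsimp only
  rw [mul_rpow_rpow_neg_half hc (div_pos hs ht).le, div_rpow hs.le ht.le, rpow_neg ht.le,
    rpow_neg hs.le]
  field_simp

theorem integrableOn_Ioi_mul_div_rpow_rpow_neg_half (hc : 0 ≤ c) (hq : 2 < q) (ht : 0 < t) :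
    IntegrableOn (fun s => (c * (s / t) ^ q) ^ (-(1:ℝ)/2)) (Ioi t) :=
  IntegrableOn.congr_fun
    ((integrableOn_Ioi_rpow_of_lt (a := -(q / 2)) (by linarith) ht).const_mul _)
    (eqOn_mul_div_rpow_rpow_neg_half hc ht).symm measurableSet_Ioi

theorem integral_Ioi_mul_div_rpow_rpow_neg_half (hc : 0 < c) (hq : 2 < q) (ht : 0 < t) :
    ∫ s in Ioi t, (c * (s / t) ^ q) ^ (-(1:ℝ)/2) = 2 / (q - 2) * √(t ^ 2 / c) := by
  rw [setIntegral_congr_fun measurableSet_Ioi (eqOn_mul_div_rpow_rpow_neg_half hc.le ht),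
    integral_const_mul, integral_Ioi_rpow_of_lt (by linarith) ht, sqrt_div' _ hc.le,
    sqrt_sq ht.le, show -(q / 2) + 1 = -((q - 2) / 2) by ring, rpow_neg ht.le]
  have : t ^ (q / 2) = t * t ^ ((q - 2) / 2) := by
    rw [← rpow_one_add' ht.le (by linarith)]; ring_nf
  rw [this]
  have : (q - 2) ≠ 0 := by linarith
  field_simp

variable {G : ℝ → ℝ}

theorem setIntegral_Ioi_rpow_neg_half_le (hc : 0 < c) (hq : 2 < q) (ht : 0 < t)
    (hG : ∀ s > t, c * (s / t) ^ q ≤ G s)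
    (hint : IntegrableOn (fun s => G s ^ (-(1:ℝ)/2)) (Ioi t)) :
    ∫ s in Ioi t, G s ^ (-(1:ℝ)/2) ≤ 2 / (q - 2) * √(t ^ 2 / c) := by
  rw [← integral_Ioi_mul_div_rpow_rpow_neg_half hc hq ht]
  refine setIntegral_mono_on hint (integrableOn_Ioi_mul_div_rpow_rpow_neg_half hc.le hq ht)
    measurableSet_Ioi fun s hs => rpow_le_rpow_of_nonpos ?_ (hG s hs) (by norm_num)
  have : 0 < s / t := div_pos (ht.trans hs) ht
  positivity

theorem le_setIntegral_Ioi_rpow_neg_half (hc : 0 < c) (hq : 2 < q) (ht : 0 < t)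
    (hG_pos : ∀ s > t, 0 < G s) (hG : ∀ s > t, G s ≤ c * (s / t) ^ q)
    (hint : IntegrableOn (fun s => G s ^ (-(1:ℝ)/2)) (Ioi t)) :
    2 / (q - 2) * √(t ^ 2 / c) ≤ ∫ s in Ioi t, G s ^ (-(1:ℝ)/2) := by
  rw [← integral_Ioi_mul_div_rpow_rpow_neg_half hc hq ht]
  exact setIntegral_mono_on (integrableOn_Ioi_mul_div_rpow_rpow_neg_half hc.le hq ht) hint
    measurableSet_Ioi fun s hs => rpow_le_rpow_of_nonpos (hG_pos s hs) (hG s hs) (by norm_num)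

end TailIntegral

theorem sqrt_sq_div_mul_div {t x k : ℝ} (ht : 0 < t) (hx : 0 < x) (hk : 0 < k) :
    √(t ^ 2 / (t * x / k)) = √k * √(t / x) := by
  rw [← sqrt_mul hk.le]
  congr 1
  field_simp

theorem varphi_comparable_sqrt (f : ℝ → ℝ) (m M : ℝ) (hm : 0 < m) (hmM : m ≤ M)
    (hf : ContDiffOn ℝ 1 f (Set.Ioi 0)) (hfpos : ∀ t > (0:ℝ), 0 < f t)
    (hFcond : ∀ t > (0:ℝ), (1 + m) * f t ≤ t * deriv f t ∧ t * deriv f t ≤ (1 + M) * f t)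
    (F φ : ℝ → ℝ)
    (hFdef : ∀ t > (0:ℝ), F t = ∫ s in (0:ℝ)..t, f s)
    (hφfin : ∀ t > (0:ℝ), MeasureTheory.IntegrableOn (fun s => (F s) ^ (-(1:ℝ)/2)) (Set.Ioi t))
    (hφdef : ∀ t > (0:ℝ), φ t = ∫ s in Set.Ioi t, (F s) ^ (-(1:ℝ)/2)) :
    ∃ c₁ > (0:ℝ), ∃ c₂ > (0:ℝ), ∀ t > (0:ℝ),
      c₁ * Real.sqrt (t / f t) ≤ φ t ∧ φ t ≤ c₂ * Real.sqrt (t / f t) := by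
  have hM : 0 < M := hm.trans_le hmM
  have hfd : DifferentiableOn ℝ f (Ioi 0) := hf.differentiableOn one_ne_zero
  have hf_mono : MonotoneOn f (Ioi 0) := by
    simpa using monotoneOn_mul_rpow_neg_of_le_mul_deriv (p := 0) hfd fun t ht => by
      nlinarith [hfpos t ht, (hFcond t ht).1]
  have hmono := monotoneOn_mul_rpow_neg_of_le_mul_deriv hfd fun t ht => (hFcond t ht).1
  have hanti := antitoneOn_mul_rpow_neg_of_mul_deriv_le hfd fun t ht => (hFcond t ht).2
  have hint : ∀ t > (0:ℝ), IntervalIntegrable f volume 0 t := fun t ht =>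
    intervalIntegrable_of_monotoneOn_Ioi ht hf_mono fun s hs => (hfpos s hs).le
  have hF_pos : ∀ s > (0:ℝ), 0 < F s := fun s hs => hFdef s hs ▸
    intervalIntegral.intervalIntegral_pos_of_pos_on (hint s hs)
      (fun x hx => hfpos x hx.1) hs
  have hF_le : ∀ t > (0:ℝ), ∀ s > t, F s ≤ t * f t / (2 + m) * (s / t) ^ (2 + M) :=
    fun t ht s hs => by
      rw [hFdef s (ht.trans hs), show 2 + m = 1 + m + 1 by ring, show 2 + M = 1 + M + 1 by ring]
      exact intervalIntegral_le_mul_div_mul_rpow (by linarith) hmono hanti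
        (hint s (ht.trans hs)) ht hs.le
  have hF_ge : ∀ t > (0:ℝ), ∀ s > t, t * f t / (2 + M) * (s / t) ^ (2 + m) ≤ F s :=
    fun t ht s hs => by
      rw [hFdef s (ht.trans hs), show 2 + m = 1 + m + 1 by ring, show 2 + M = 1 + M + 1 by ring]
      exact mul_div_mul_rpow_le_intervalIntegral (by linarith) hmono hanti
        (hint s (ht.trans hs)) ht hs.le
  refine ⟨2 / M * √(2 + m), by positivity, 2 / m * √(2 + M), by positivity,
    fun t ht => ⟨?_, ?_⟩⟩
  · have := le_setIntegral_Ioi_rpow_neg_half (by have := hfpos t ht; positivity)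
      (by linarith) ht (fun s hs => hF_pos s (ht.trans hs)) (hF_le t ht) (hφfin t ht)
    rwa [sqrt_sq_div_mul_div ht (hfpos t ht) (by linarith), ← hφdef t ht,
      show 2 + M - 2 = M by ring, ← mul_assoc] at this
  · have := setIntegral_Ioi_rpow_neg_half_le (by have := hfpos t ht; positivity)
      (by linarith) ht (hF_ge t ht) (hφfin t ht)
    rwa [sqrt_sq_div_mul_div ht (hfpos t ht) (by linarith), ← hφdef t ht,
      show 2 + m - 2 = m by ring, ← mul_assoc] at this
end

section
/- Let f satisfy condition (F) with constants 0 < m ≤ M, let F(t) = ∫₀^t f(s) ds, and let φ(t) = ∫_t^∞ ds/√(F(s)). Then for all t > 0: (m/2) · φ(t)/t ≤ |φ'(t)| ≤ (M/2) · φ(t)/t, where φ'(t) = -1/√(F(t)). -/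
/-!
Integrating condition (F) from `0`, where `f` and `F` vanish, gives
`(2 + m) F ≤ t f ≤ (2 + M) F`. Since `(t / √F)' = (1 - t f / (2 F)) / √F`, this says
`(M/2) φ' ≤ (t / √F)' ≤ (m/2) φ'`. The first inequality also shows that `F t / t ^ (2 + m)`
increases, so `t / √F` and `φ` both vanish at infinity, and integrating the derivative bounds
from `t` to `∞` yields `(m/2) φ t ≤ t / √(F t) ≤ (M/2) φ t`.
-/

open Set Filter Topology MeasureTheory

lemma monotoneOn_Ioi_of_hasDerivAt_nonneg {g g' : ℝ → ℝ} {a : ℝ}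
    (hg : ∀ s > a, HasDerivAt g (g' s) s) (hg' : ∀ s > a, 0 ≤ g' s) :
    MonotoneOn g (Ioi a) :=
  monotoneOn_of_hasDerivWithinAt_nonneg (convex_Ioi a)
    (fun s hs => (hg s hs).continuousAt.continuousWithinAt)
    (fun s hs => by rw [interior_Ioi] at hs ⊢; exact (hg s hs).hasDerivWithinAt)
    (fun s hs => hg' s (by rwa [interior_Ioi] at hs))

lemma le_of_hasDerivAt_le_of_tendsto_nhdsGT {u v u' v' : ℝ → ℝ} {a : ℝ}
    (hu : ∀ s > a, HasDerivAt u (u' s) s) (hv : ∀ s > a, HasDerivAt v (v' s) s)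
    (huv' : ∀ s > a, u' s ≤ v' s) (hlim : Tendsto (fun s => v s - u s) (𝓝[>] a) (𝓝 0)) :
    ∀ t > a, u t ≤ v t := by
  have hmono := monotoneOn_Ioi_of_hasDerivAt_nonneg (fun s hs => (hv s hs).sub (hu s hs))
    (fun s hs => sub_nonneg.2 (huv' s hs))
  intro t ht
  have : 0 ≤ v t - u t := le_of_tendsto hlim <| by
    filter_upwards [Ioo_mem_nhdsGT ht] with s hs using hmono hs.1 ht hs.2.le
  linarith

lemma le_of_hasDerivAt_le_of_tendsto_atTop {u v u' v' : ℝ → ℝ} {a : ℝ}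
    (hu : ∀ s > a, HasDerivAt u (u' s) s) (hv : ∀ s > a, HasDerivAt v (v' s) s)
    (hvu' : ∀ s > a, v' s ≤ u' s) (hlim : Tendsto (fun s => u s - v s) atTop (𝓝 0)) :
    ∀ t > a, u t ≤ v t := by
  have hmono := monotoneOn_Ioi_of_hasDerivAt_nonneg (fun s hs => (hu s hs).sub (hv s hs))
    (fun s hs => sub_nonneg.2 (hvu' s hs))
  intro t ht
  have : u t - v t ≤ 0 := ge_of_tendsto hlim <| by
    filter_upwards [eventually_ge_atTop t] with s hs using hmono ht (ht.trans_le hs) hs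
  linarith

lemma intervalIntegrable_of_tendsto_nhdsGT {f : ℝ → ℝ} {a b L : ℝ}
    (hfc : ContinuousOn f (Ioi a)) (hf : Tendsto f (𝓝[>] a) (𝓝 L)) (hab : a ≤ b) :
    IntervalIntegrable f volume a b := by
  classical
  have hcont : ContinuousOn (Function.update f a L) (Icc a b) := by
    refine continuousOn_update_iff.2 ⟨?_, fun _ => ?_⟩ <;> rw [Icc_sdiff_left]
    · exact hfc.mono Ioc_subset_Ioi_self
    · exact hf.mono_left (nhdsWithin_mono _ Ioc_subset_Ioi_self)
  refine (intervalIntegrable_iff_integrableOn_Ioc_of_le hab).2 ?_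
  exact (hcont.integrableOn_Icc.mono_set Ioc_subset_Icc_self).congr_fun
    (fun s hs => Function.update_of_ne hs.1.ne' _ _) measurableSet_Ioc

section Primitive

variable {f F : ℝ → ℝ} {a L : ℝ}

lemma hasDerivAt_of_eq_primitive (hfc : ContinuousOn f (Ioi a))
    (hf : Tendsto f (𝓝[>] a) (𝓝 L))
    (hFdef : ∀ t > a, F t = ∫ s in a..t, f s) : ∀ t > a, HasDerivAt F (f t) t := by
  intro t ht
  have hprim := intervalIntegral.integral_hasDerivAt_right
    (intervalIntegrable_of_tendsto_nhdsGT hfc hf ht.le)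
    (hfc.stronglyMeasurableAtFilter isOpen_Ioi t ht) (hfc.continuousAt (isOpen_Ioi.mem_nhds ht))
  exact hprim.congr_of_eventuallyEq (eventually_of_mem (isOpen_Ioi.mem_nhds ht) hFdef)

lemma tendsto_of_eq_primitive_nhdsGT (hfc : ContinuousOn f (Ioi a))
    (hf : Tendsto f (𝓝[>] a) (𝓝 L)) (hFdef : ∀ t > a, F t = ∫ s in a..t, f s) :
    Tendsto F (𝓝[>] a) (𝓝 0) := by
  have hcont := intervalIntegral.continuousOn_primitive_interval' (a := a)
    (intervalIntegrable_of_tendsto_nhdsGT hfc hf (le_add_of_nonneg_right zero_le_one))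
    left_mem_uIcc
  have hlim : Tendsto (fun t => ∫ s in a..t, f s) (𝓝[>] a) (𝓝 0) := by
    rw [← nhdsWithin_Ioo_eq_nhdsGT (lt_add_one a)]
    simpa using (hcont a left_mem_uIcc).tendsto.mono_left
      (nhdsWithin_mono _ (Ioo_subset_Icc_self.trans Icc_subset_uIcc))
  exact hlim.congr' (eventually_nhdsWithin_of_forall fun t ht => (hFdef t ht).symm)

end Primitive

lemma mul_bounds_of_mul_deriv_bounds {f f' F : ℝ → ℝ} {m M : ℝ}
    (hf : ∀ t > 0, HasDerivAt f (f' t) t) (hf0 : Tendsto f (𝓝[>] 0) (𝓝 0))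
    (hF : ∀ t > 0, HasDerivAt F (f t) t) (hF0 : Tendsto F (𝓝[>] 0) (𝓝 0))
    (hcond : ∀ t > 0, (1 + m) * f t ≤ t * f' t ∧ t * f' t ≤ (1 + M) * f t) :
    ∀ t > 0, (2 + m) * F t ≤ t * f t ∧ t * f t ≤ (2 + M) * F t := by
  have hmul : ∀ t > 0, HasDerivAt (fun s => s * f s) (1 * f t + t * f' t) t :=
    fun t ht => (hasDerivAt_id' t).mul (hf t ht)
  have hmul0 : Tendsto (fun s => s * f s) (𝓝[>] 0) (𝓝 0) := by
    simpa using (tendsto_nhdsWithin_of_tendsto_nhds tendsto_id).mul hf0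
  intro t ht
  constructor
  · refine le_of_hasDerivAt_le_of_tendsto_nhdsGT (fun s hs => (hF s hs).const_mul (2 + m)) hmul
      (fun s hs => by linarith [(hcond s hs).1]) ?_ t ht
    simpa using hmul0.sub (hF0.const_mul (2 + m))
  · refine le_of_hasDerivAt_le_of_tendsto_nhdsGT hmul (fun s hs => (hF s hs).const_mul (2 + M))
      (fun s hs => by linarith [(hcond s hs).2]) ?_ t ht
    simpa using (hF0.const_mul (2 + M)).sub hmul0

lemma monotoneOn_div_rpow {F f : ℝ → ℝ} {p : ℝ} (hF : ∀ s > 0, HasDerivAt F (f s) s)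
    (hp : ∀ s > 0, p * F s ≤ s * f s) : MonotoneOn (fun s => F s / s ^ p) (Ioi 0) := by
  refine monotoneOn_Ioi_of_hasDerivAt_nonneg
    (fun s hs => (hF s hs).div (Real.hasDerivAt_rpow_const (Or.inl hs.ne'))
      (Real.rpow_pos_of_pos hs p).ne') fun s hs => div_nonneg ?_ (sq_nonneg _)
  have hnum : f s * s ^ p - F s * (p * s ^ (p - 1)) = s ^ (p - 1) * (s * f s - p * F s) := by
    rw [Real.rpow_sub_one hs.ne']
    field_simp
  rw [hnum]
  exact mul_nonneg (Real.rpow_nonneg hs.le _) (sub_nonneg.2 (hp s hs))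

lemma tendsto_div_sqrt_atTop_zero {F : ℝ → ℝ} {c p : ℝ} (hc : 0 < c) (hp : 2 < p)
    (hF : ∀ s ≥ 1, c * s ^ p ≤ F s) : Tendsto (fun s => s / √(F s)) atTop (𝓝 0) := by
  have hbound : ∀ s ≥ 1, s ^ 2 / F s ≤ c⁻¹ * s ^ (2 - p) := by
    intro s hs
    have hs0 : 0 < s := one_pos.trans_le hs
    calc s ^ 2 / F s ≤ s ^ 2 / (c * s ^ p) :=
          div_le_div_of_nonneg_left (sq_nonneg s) (by positivity) (hF s hs)
      _ = c⁻¹ * s ^ (2 - p) := by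
          rw [Real.rpow_sub hs0, Real.rpow_two]
          field_simp
  have hsq : Tendsto (fun s => s ^ 2 / F s) atTop (𝓝 0) := by
    refine squeeze_zero' ?_ ?_ (by simpa using
      (tendsto_rpow_neg_atTop (by linarith : 0 < p - 2)).const_mul c⁻¹)
    · filter_upwards [eventually_ge_atTop 1] with s hs
      exact div_nonneg (sq_nonneg s) ((by positivity : 0 < c * s ^ p).le.trans (hF s hs))
    · filter_upwards [eventually_ge_atTop 1] with s hs using hbound s hs
  have hsqrt := (Real.continuous_sqrt.tendsto 0).comp hsq
  rw [Real.sqrt_zero] at hsqrt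
  refine hsqrt.congr' ?_
  filter_upwards [eventually_ge_atTop 0] with s hs
  rw [Function.comp_apply, Real.sqrt_div (sq_nonneg s), Real.sqrt_sq hs]

lemma integrableOn_rpow_neg_half_Ioi {F : ℝ → ℝ} {c p : ℝ} (hc : 0 < c) (hp : 2 < p)
    (hFc : ContinuousOn F (Ioi 1)) (hF : ∀ s ≥ 1, c * s ^ p ≤ F s) :
    IntegrableOn (fun s => F s ^ (-(1:ℝ) / 2)) (Ioi 1) := by
  have hFpos : ∀ s ≥ 1, 0 < F s := fun s hs =>
    (by have := one_pos.trans_le hs; positivity : 0 < c * s ^ p).trans_le (hF s hs)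
  have hdom : IntegrableOn (fun s : ℝ => c ^ (-(1:ℝ) / 2) * s ^ (-(p / 2))) (Ioi 1) :=
    (integrableOn_Ioi_rpow_of_lt (by linarith) one_pos).const_mul _
  have hcont : ContinuousOn (fun s => F s ^ (-(1:ℝ) / 2)) (Ioi 1) :=
    hFc.rpow_const fun s hs => Or.inl (hFpos s (le_of_lt hs)).ne'
  refine hdom.mono' (hcont.aestronglyMeasurable measurableSet_Ioi) ?_
  filter_upwards [ae_restrict_mem measurableSet_Ioi] with s (hs : 1 < s)
  have hs0 : 0 < s := one_pos.trans hs
  rw [Real.norm_eq_abs, abs_of_nonneg (Real.rpow_nonneg (hFpos s hs.le).le _)]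
  calc F s ^ (-(1:ℝ) / 2) ≤ (c * s ^ p) ^ (-(1:ℝ) / 2) :=
        Real.rpow_le_rpow_of_nonpos (by positivity) (hF s hs.le) (by norm_num)
    _ = c ^ (-(1:ℝ) / 2) * s ^ (-(p / 2)) := by
        rw [Real.mul_rpow hc.le (by positivity), ← Real.rpow_mul hs0.le]
        ring_nf

lemma tendsto_setIntegral_Ioi_atTop_zero {g : ℝ → ℝ} {a : ℝ} (hg : IntegrableOn g (Ioi a)) :
    Tendsto (fun t => ∫ s in Ioi t, g s) atTop (𝓝 0) := by
  have hInter : ⋂ t : ℝ, Ioi t = ∅ :=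
    eq_empty_of_forall_notMem fun x hx => lt_irrefl x (mem_iInter.1 hx x)
  simpa [hInter] using tendsto_setIntegral_of_antitone (s := fun t : ℝ => Ioi t)
    (fun _ => measurableSet_Ioi) (fun _ _ h => Ioi_subset_Ioi h) ⟨a, hg⟩

lemma hasDerivAt_div_sqrt {F : ℝ → ℝ} {f s : ℝ} (hF : HasDerivAt F f s) (hFs : 0 < F s) :
    HasDerivAt (fun x => x / √(F x)) ((1 - s * f / (2 * F s)) / √(F s)) s := by
  have hsqrt : 0 < √(F s) := Real.sqrt_pos.2 hFs
  refine ((hasDerivAt_id' s).div (hF.sqrt hFs.ne') hsqrt.ne').congr_deriv ?_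
  rw [Real.sq_sqrt hFs.le]
  field_simp
  rw [Real.sq_sqrt hFs.le]
  ring

lemma div_sqrt_deriv_le_iff {F x k : ℝ} (hF : 0 < F) :
    (1 - x / (2 * F)) / √F ≤ k / 2 * -(1 / √F) ↔ (2 + k) * F ≤ x := by
  rw [mul_neg, mul_one_div, ← neg_div, div_le_div_iff_of_pos_right (Real.sqrt_pos.2 hF),
    sub_le_iff_le_add, ← sub_le_iff_le_add', le_div_iff₀ (by positivity)]
  constructor <;> intro h <;> linarith

lemma le_div_sqrt_deriv_iff {F x k : ℝ} (hF : 0 < F) :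
    k / 2 * -(1 / √F) ≤ (1 - x / (2 * F)) / √F ↔ x ≤ (2 + k) * F := by
  rw [mul_neg, mul_one_div, ← neg_div, div_le_div_iff_of_pos_right (Real.sqrt_pos.2 hF),
    le_sub_iff_add_le, ← le_sub_iff_add_le', div_le_iff₀ (by positivity)]
  constructor <;> intro h <;> linarith

theorem varphi_deriv_bounds_general (f F φ : ℝ → ℝ) (m M : ℝ) (hm : 0 < m)
    (hf : ContDiffOn ℝ 1 f (Set.Ioi 0)) (hfpos : ∀ t > (0:ℝ), 0 < f t)
    (hf0 : Filter.Tendsto f (nhdsWithin 0 (Set.Ioi 0)) (nhds 0))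
    (hFcond : ∀ t > (0:ℝ), (1 + m) * f t ≤ t * deriv f t ∧ t * deriv f t ≤ (1 + M) * f t)
    (hFdef : ∀ t > (0:ℝ), F t = ∫ s in (0:ℝ)..t, f s)
    (hφdef : ∀ t > (0:ℝ), φ t = ∫ s in Set.Ioi t, (F s) ^ (-(1:ℝ)/2))
    (hφ' : ∀ t > (0:ℝ), HasDerivAt φ (-(1 / Real.sqrt (F t))) t) :
    ∀ t > (0:ℝ), (m / 2) * (φ t / t) ≤ |(-(1 / Real.sqrt (F t)))| ∧
      |(-(1 / Real.sqrt (F t)))| ≤ (M / 2) * (φ t / t) := by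
  have hfc : ContinuousOn f (Ioi 0) := hf.continuousOn
  have hf' : ∀ t > 0, HasDerivAt f (deriv f t) t := fun t ht =>
    ((hf.differentiableOn one_ne_zero t ht).differentiableAt (isOpen_Ioi.mem_nhds ht)).hasDerivAt
  have hF' := hasDerivAt_of_eq_primitive hfc hf0 hFdef
  have hFpos : ∀ t > 0, 0 < F t := fun t ht => hFdef t ht ▸
    intervalIntegral.intervalIntegral_pos_of_pos_on
      (intervalIntegrable_of_tendsto_nhdsGT hfc hf0 ht.le) (fun s hs => hfpos s hs.1) ht
  have hbounds := mul_bounds_of_mul_deriv_bounds hf' hf0 hF'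
    (tendsto_of_eq_primitive_nhdsGT hfc hf0 hFdef) hFcond
  have hgrow : ∀ s ≥ 1, F 1 * s ^ (2 + m) ≤ F s := fun s hs => by
    simpa [le_div_iff₀ (by positivity : 0 < s ^ (2 + m))] using
      monotoneOn_div_rpow hF' (fun t ht => (hbounds t ht).1) (mem_Ioi.2 one_pos)
        (mem_Ioi.2 (one_pos.trans_le hs)) hs
  have hφ0 : Tendsto φ atTop (𝓝 0) := by
    refine (tendsto_setIntegral_Ioi_atTop_zero (integrableOn_rpow_neg_half_Ioi (hFpos 1 one_pos)
      (by linarith) (fun s hs => (hF' s (one_pos.trans hs)).continuousAt.continuousWithinAt)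
      hgrow)).congr' ?_
    filter_upwards [eventually_gt_atTop 0] with t ht using (hφdef t ht).symm
  have hg0 := tendsto_div_sqrt_atTop_zero (hFpos 1 one_pos) (by linarith) hgrow
  have hg' := fun s (hs : s > 0) => hasDerivAt_div_sqrt (hF' s hs) (hFpos s hs)
  intro t ht
  have hlow := le_of_hasDerivAt_le_of_tendsto_atTop (fun s hs => (hφ' s hs).const_mul (m / 2)) hg'
    (fun s hs => (div_sqrt_deriv_le_iff (hFpos s hs)).2 (hbounds s hs).1)
    (by simpa using (hφ0.const_mul (m / 2)).sub hg0) t ht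
  have hup := le_of_hasDerivAt_le_of_tendsto_atTop hg' (fun s hs => (hφ' s hs).const_mul (M / 2))
    (fun s hs => (le_div_sqrt_deriv_iff (hFpos s hs)).2 (hbounds s hs).2)
    (by simpa using hg0.sub (hφ0.const_mul (M / 2))) t ht
  rw [abs_neg, abs_of_pos (by have := hFpos t ht; positivity), ← mul_div_assoc, ← mul_div_assoc,
    div_le_iff₀ ht, le_div_iff₀ ht, one_div_mul_eq_div]
  exact ⟨hlow, hup⟩

theorem varphi_deriv_bounds (f F φ : ℝ → ℝ) (m M : ℝ) (hm : 0 < m) (hmM : m ≤ M)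
    (hf : ContDiffOn ℝ 1 f (Set.Ioi 0)) (hfpos : ∀ t > (0:ℝ), 0 < f t)
    (hf0 : Filter.Tendsto f (nhdsWithin 0 (Set.Ioi 0)) (nhds 0))
    (hFcond : ∀ t > (0:ℝ), (1 + m) * f t ≤ t * deriv f t ∧ t * deriv f t ≤ (1 + M) * f t)
    (hFdef : ∀ t > (0:ℝ), F t = ∫ s in (0:ℝ)..t, f s)
    (hφdef : ∀ t > (0:ℝ), φ t = ∫ s in Set.Ioi t, (F s) ^ (-(1:ℝ)/2))
    (hφanti : StrictAntiOn φ (Set.Ioi 0))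
    (hφ' : ∀ t > (0:ℝ), HasDerivAt φ (-(1 / Real.sqrt (F t))) t) :
    ∀ t > (0:ℝ), (m / 2) * (φ t / t) ≤ |(-(1 / Real.sqrt (F t)))| ∧
      |(-(1 / Real.sqrt (F t)))| ≤ (M / 2) * (φ t / t) :=
  varphi_deriv_bounds_general f F φ m M hm hf hfpos hf0 hFcond hFdef hφdef hφ'
end

section
/- Let u ∈ C^{2,α}(ℝ^d) with α ∈ (0,1]. Then for all x₁, x₂, h ∈ ℝ^d: |u(x₁+h) - u(x₁) - ∇u(x₁)·h - u(x₂+h) + u(x₂) + ∇u(x₂)·h| ≤ [u]_{2,α} (2|x₁-x₂|^{2+α} + |x₁-x₂|² |h|^α + |x₁-x₂| |h|^{1+α} + |x₁-x₂|^{1+α} |h|), where [u]_{2,α} is the Hölder seminorm of the Hessian. -/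
/-!
Write `R x = u (x + h) - u x - Du(x) h`. By the symmetry of the Hessian, the derivative of `R` at
`x` is `Du(x + h) - Du(x) - D²u(x) h`, which by the mean value inequality applied to `Du` and the
Hölder bound on `D²u` has norm at most `K ‖h‖^(1+α)`. A second application of the mean value
inequality, now to `R`, gives `|R x₁ - R x₂| ≤ K ‖h‖^(1+α) ‖x₁ - x₂‖`, which is one of the terms
on the right-hand side.
-/

variable {E F : Type*} [NormedAddCommGroup E] [NormedSpace ℝ E]
  [NormedAddCommGroup F] [NormedSpace ℝ F]

theorem norm_sub_sub_apply_le_of_holder_fderiv {G : E → F} {H : E → E →L[ℝ] F} {K α : ℝ}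
    (hK : 0 ≤ K) (hα : 0 ≤ α) (hG : ∀ x, HasFDerivAt G (H x) x)
    (hH : ∀ x y, ‖H x - H y‖ ≤ K * ‖x - y‖ ^ α) (x h : E) :
    ‖G (x + h) - G x - H x h‖ ≤ K * ‖h‖ ^ (1 + α) := by
  have hbound : ∀ y ∈ Metric.closedBall x ‖h‖, ‖H y - H x‖ ≤ K * ‖h‖ ^ α := fun y hy =>
    (hH y x).trans <| mul_le_mul_of_nonneg_left
      (Real.rpow_le_rpow (norm_nonneg _) (mem_closedBall_iff_norm.mp hy) hα) hK
  have hmem : x + h ∈ Metric.closedBall x ‖h‖ := by simp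
  have := (convex_closedBall x ‖h‖).norm_image_sub_le_of_norm_hasFDerivWithin_le'
    (fun y _ => (hG y).hasFDerivWithinAt) hbound (Metric.mem_closedBall_self (norm_nonneg h)) hmem
  rw [Real.rpow_one_add' (norm_nonneg h) (by positivity), mul_left_comm]
  simpa [mul_comm] using this

theorem hasFDerivAt_sub_sub_fderiv_apply {u : E → F} {G : E → E →L[ℝ] F}
    {H : E → E →L[ℝ] E →L[ℝ] F} (hu : ∀ x, HasFDerivAt u (G x) x)
    (hG : ∀ x, HasFDerivAt G (H x) x) (h x : E) :
    HasFDerivAt (fun y => u (y + h) - u y - G y h) (G (x + h) - G x - H x h) x := by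
  have hshift : HasFDerivAt (fun y => u (y + h)) (G (x + h)) x := by
    simpa [Function.comp_def] using (hu (x + h)).comp x ((hasFDerivAt_id x).add_const h)
  refine ((hshift.sub (hu x)).sub ((hG x).clm_apply (hasFDerivAt_const h x))).congr_fderiv ?_
  ext v
  simp [second_derivative_symmetric hu (hG x) v h]

theorem norm_taylor_remainder_sub_le_of_holder_fderiv {u : E → F} {G : E → E →L[ℝ] F}
    {H : E → E →L[ℝ] E →L[ℝ] F} {K α : ℝ} (hK : 0 ≤ K) (hα : 0 ≤ α)
    (hu : ∀ x, HasFDerivAt u (G x) x) (hG : ∀ x, HasFDerivAt G (H x) x)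
    (hH : ∀ x y, ‖H x - H y‖ ≤ K * ‖x - y‖ ^ α) (x₁ x₂ h : E) :
    ‖(u (x₁ + h) - u x₁ - G x₁ h) - (u (x₂ + h) - u x₂ - G x₂ h)‖
      ≤ K * ‖h‖ ^ (1 + α) * ‖x₁ - x₂‖ :=
  convex_univ.norm_image_sub_le_of_norm_hasFDerivWithin_le
    (fun x _ => (hasFDerivAt_sub_sub_fderiv_apply hu hG h x).hasFDerivWithinAt)
    (fun x _ => norm_sub_sub_apply_le_of_holder_fderiv hK hα hG hH x h)
    (Set.mem_univ x₂) (Set.mem_univ x₁)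

theorem taylor_difference_bound_C2alpha (d : ℕ) (α K : ℝ) (hα : α ∈ Set.Ioc (0:ℝ) 1)
    (u : EuclideanSpace ℝ (Fin d) → ℝ) (hu : ContDiff ℝ 2 u)
    (hH : ∀ x y, ‖fderiv ℝ (fderiv ℝ u) x - fderiv ℝ (fderiv ℝ u) y‖ ≤ K * ‖x - y‖ ^ α) :
    ∀ x₁ x₂ h,
      |u (x₁ + h) - u x₁ - fderiv ℝ u x₁ h - u (x₂ + h) + u x₂ + fderiv ℝ u x₂ h|
        ≤ K * (2 * ‖x₁ - x₂‖ ^ (2 + α) + ‖x₁ - x₂‖ ^ (2:ℕ) * ‖h‖ ^ α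
            + ‖x₁ - x₂‖ * ‖h‖ ^ (1 + α) + ‖x₁ - x₂‖ ^ (1 + α) * ‖h‖) := by
  intro x₁ x₂ h
  have hα0 : 0 ≤ α := hα.1.le
  rcases eq_or_ne x₁ x₂ with rfl | hne
  · simp [Real.zero_rpow (by positivity : (2:ℝ) + α ≠ 0),
      Real.zero_rpow (by positivity : (1:ℝ) + α ≠ 0)]
    ring
  have hK : 0 ≤ K := (mul_nonneg_iff_of_pos_right
    (Real.rpow_pos_of_pos (norm_pos_iff.mpr (sub_ne_zero.mpr hne)) α)).mp
    ((norm_nonneg (fderiv ℝ (fderiv ℝ u) x₁ - fderiv ℝ (fderiv ℝ u) x₂)).trans (hH x₁ x₂))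
  have hDu : ∀ x, HasFDerivAt u (fderiv ℝ u x) x := fun x =>
    (hu.differentiable (by norm_num) x).hasFDerivAt
  have hD2u : ∀ x, HasFDerivAt (fderiv ℝ u) (fderiv ℝ (fderiv ℝ u) x) x := fun x =>
    ((hu.fderiv_right (m := 1) (by norm_num)).differentiable (by norm_num) x).hasFDerivAt
  have hmain := norm_taylor_remainder_sub_le_of_holder_fderiv hK hα0 hDu hD2u hH x₁ x₂ h
  rw [Real.norm_eq_abs] at hmain
  have t1 : 0 ≤ ‖x₁ - x₂‖ ^ (2 + α) := by positivity
  have t2 : 0 ≤ ‖x₁ - x₂‖ ^ (2:ℕ) * ‖h‖ ^ α := by positivity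
  have t3 : 0 ≤ ‖x₁ - x₂‖ ^ (1 + α) * ‖h‖ := by positivity
  calc |u (x₁ + h) - u x₁ - fderiv ℝ u x₁ h - u (x₂ + h) + u x₂ + fderiv ℝ u x₂ h|
      = |(u (x₁ + h) - u x₁ - fderiv ℝ u x₁ h) - (u (x₂ + h) - u x₂ - fderiv ℝ u x₂ h)| := by
        congr 1; ring
    _ ≤ K * (‖x₁ - x₂‖ * ‖h‖ ^ (1 + α)) := hmain.trans_eq (by ring)
    _ ≤ _ := by gcongr; linarith
end
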